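/- arXiv:1801.04039 — 10 statements merged into one kernel-verified Lean document; each statement's English description precedes it below -/
import Mathlib

section
/- For every nonempty closed subset S of the extended real line there exists a function f : [0,1] → ℝ such that the set of right-hand sequential secant derivatives of f at 0 is exactly S. -/
/-!
For a real sequence `r`, the function `x ↦ x * r ⌊1/x⌋₊` has secant slope `r ⌊1/x⌋₊` at `x > 0`,
so its secant derivatives at `0` are exactly the cluster points of `r` in `EReal`. A closed set `S`
is the cluster set of a dense sequence of `S` in which every term recurs infinitely often; clamping
its `n`-th term to `[-n, n]` makes it real without changing its cluster points, by compactness of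
`EReal`.
-/

open Filter Topology

/-- `L` is a right-hand sequential secant derivative at `0` of `f : [0,1] → ℝ`. -/
def IsRightSecantDeriv (f : ℝ → ℝ) (L : EReal) : Prop :=
  ∃ h : ℕ → ℝ, (∀ n, 0 < h n) ∧ (∀ n, h n ≤ 1) ∧ Tendsto h atTop (𝓝 0) ∧
    Tendsto (fun n => (((f (h n) - f 0) / h n : ℝ) : EReal)) atTop (𝓝 L)

theorem IsClosed.exists_seq_mapClusterPt_iff {X : Type*} [TopologicalSpace X]
    [SecondCountableTopology X] {S : Set X} (hS : IsClosed S) (hne : S.Nonempty) :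
    ∃ e : ℕ → X, ∀ x, MapClusterPt x atTop e ↔ x ∈ S := by
  have : Nonempty S := hne.to_subtype
  obtain ⟨u, hu⟩ := TopologicalSpace.exists_dense_seq S
  refine ⟨fun n => u n.unpair.1, fun x => ⟨fun hx => hS.mem_of_mapClusterPt hx
    (.of_forall fun n => (u _).2), fun hx => ?_⟩⟩
  have hrange : ((↑) '' Set.range u : Set X) ⊆
      {x | MapClusterPt x atTop fun n : ℕ => (u n.unpair.1 : X)} := by
    rintro _ ⟨_, ⟨k, rfl⟩, rfl⟩
    refine MapClusterPt.of_comp (φ := Nat.pair k) (p := atTop) ?_ ?_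
    · exact tendsto_atTop_mono (Nat.right_le_pair k) tendsto_id
    · simpa [Function.comp_def] using (tendsto_const_nhds (x := (u k : X))).mapClusterPt
  exact closure_minimal hrange isClosed_setOfPred_clusterPt (Subtype.dense_iff.1 hu hx)

noncomputable def clampToReal (m : ℝ) (x : EReal) : ℝ :=
  (max (-(m : EReal)) (min (m : EReal) x)).toReal

lemma coe_clampToReal (m : ℝ) (x : EReal) :
    (clampToReal m x : EReal) = max (-(m : EReal)) (min (m : EReal) x) := by
  refine EReal.coe_toReal ?_ ?_
  · exact (max_lt (EReal.coe_lt_top _) ((min_le_left _ _).trans_lt (EReal.coe_lt_top _))).ne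
  · exact ((EReal.bot_lt_coe _).trans_le (le_max_left _ _)).ne'

lemma tendsto_clampToReal {ι : Type*} {l : Filter ι} {m : ι → ℝ} (hm : Tendsto m l atTop)
    {x : ι → EReal} {L : EReal} (hx : Tendsto x l (𝓝 L)) :
    Tendsto (fun i => (clampToReal (m i) (x i) : EReal)) l (𝓝 L) := by
  have hm' : Tendsto (fun i => (m i : EReal)) l (𝓝 ⊤) := EReal.tendsto_coe_nhds_top_iff.2 hm
  simpa [coe_clampToReal] using hm'.neg.max (hm'.min hx)

lemma mapClusterPt_clampToReal_iff {m : ℕ → ℝ} (hm : Tendsto m atTop atTop) {x : ℕ → EReal}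
    {L : EReal} :
    MapClusterPt L atTop (fun n => (clampToReal (m n) (x n) : EReal)) ↔
      MapClusterPt L atTop x := by
  constructor
  · intro hL
    obtain ⟨ψ, hψ, hψL⟩ := hL.tendsto_subseq
    obtain ⟨L', -, φ, hφ, hφL'⟩ := isCompact_univ.tendsto_subseq (x := x ∘ ψ) fun _ => trivial
    have hmψφ := hm.comp (hψ.comp hφ).tendsto_atTop
    obtain rfl : L' = L :=
      tendsto_nhds_unique (tendsto_clampToReal hmψφ hφL') (hψL.comp hφ.tendsto_atTop)
    exact (hφL'.mapClusterPt.of_comp hφ.tendsto_atTop).of_comp hψ.tendsto_atTop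
  · intro hL
    obtain ⟨ψ, hψ, hψL⟩ := hL.tendsto_subseq
    exact (tendsto_clampToReal (hm.comp hψ.tendsto_atTop) hψL).mapClusterPt.of_comp
      hψ.tendsto_atTop

noncomputable def stepSlope (r : ℕ → ℝ) (x : ℝ) : ℝ := x * r ⌊x⁻¹⌋₊

lemma stepSlope_secant_eq (r : ℕ → ℝ) {x : ℝ} (hx : 0 < x) :
    (stepSlope r x - stepSlope r 0) / x = r ⌊x⁻¹⌋₊ := by
  simp [stepSlope, hx.ne']

theorem isRightSecantDeriv_stepSlope_iff (r : ℕ → ℝ) (L : EReal) :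
    IsRightSecantDeriv (stepSlope r) L ↔ MapClusterPt L atTop (fun n => (r n : EReal)) := by
  constructor
  · rintro ⟨h, hpos, -, h0, hL⟩
    have hfloor : Tendsto (fun n => ⌊(h n)⁻¹⌋₊) atTop atTop :=
      tendsto_nat_floor_atTop.comp <| tendsto_inv_nhdsGT_zero.comp <|
        tendsto_nhdsWithin_iff.2 ⟨h0, .of_forall hpos⟩
    refine MapClusterPt.of_comp hfloor (Tendsto.mapClusterPt ?_)
    simpa only [Function.comp_def, stepSlope_secant_eq r (hpos _)] using hL
  · intro hL
    obtain ⟨ψ, hψ, hψL⟩ := hL.tendsto_subseq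
    -- `ψ 0` may vanish, so the secants are taken at `1 / ψ (n + 1)`
    have hpos : ∀ n, (0 : ℝ) < ψ (n + 1) := fun n => by
      exact_mod_cast (Nat.succ_pos n).trans_le (hψ.id_le _)
    refine ⟨fun n => (ψ (n + 1) : ℝ)⁻¹, fun n => inv_pos.2 (hpos n), fun n => ?_, ?_, ?_⟩
    · exact inv_le_one_of_one_le₀ (by exact_mod_cast hpos n)
    · exact tendsto_inv_atTop_zero.comp <| tendsto_natCast_atTop_atTop.comp <|
        hψ.tendsto_atTop.comp (tendsto_add_atTop_nat 1)
    · simpa [Function.comp_def, stepSlope_secant_eq r (inv_pos.2 (hpos _))] using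
        hψL.comp (tendsto_add_atTop_nat 1)

theorem any_closed_set_is_secant_deriv_set (S : Set EReal) (hne : S.Nonempty)
    (hcl : IsClosed S) :
    ∃ f : ℝ → ℝ, {L : EReal | IsRightSecantDeriv f L} = S := by
  obtain ⟨x, hx⟩ := hcl.exists_seq_mapClusterPt_iff hne
  refine ⟨stepSlope fun n => clampToReal n (x n), Set.ext fun L => ?_⟩
  rw [Set.mem_ofPred_eq, isRightSecantDeriv_stepSlope_iff,
    mapClusterPt_clampToReal_iff tendsto_natCast_atTop_atTop, hx]
end

section
/- For any extended reals a < b, there exists a continuous function f : [0,1] → ℝ whose set of right-hand sequential secant derivatives at 0 equals the closed interval [a,b] in the extended real line. -/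
open Filter Topology

lemma secant_aux_sqrt_inv {u : ℕ → ℝ} (hpos : ∀ n, 0 < u n) (hu : Tendsto u atTop (𝓝 0)) :
    Tendsto (fun n => (Real.sqrt (u n))⁻¹) atTop atTop := by
  apply Filter.Tendsto.inv_tendsto_nhdsGT_zero
  rw [tendsto_nhdsWithin_iff]
  constructor
  · exact (Real.continuous_sqrt.tendsto' 0 0 (by simp)).comp hu
  · exact Filter.Eventually.of_forall fun n => Real.sqrt_pos.2 (hpos n)

lemma secant_aux_top (c : ℝ) (u : ℕ → ℝ) (hpos : ∀ n, 0 < u n) (hu : Tendsto u atTop (𝓝 0)) :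
    Tendsto (fun n => ((c + 1 / Real.sqrt (u n) : ℝ) : EReal)) atTop (𝓝 ⊤) := by
  have h2 : Tendsto (fun n => c + 1 / Real.sqrt (u n)) atTop atTop := by
    simp only [one_div]
    exact tendsto_atTop_add_const_left _ c (secant_aux_sqrt_inv hpos hu)
  rw [EReal.tendsto_nhds_top_iff_real]
  intro x
  filter_upwards [h2.eventually_gt_atTop x] with n hn
  exact_mod_cast hn

lemma secant_aux_bot (c : ℝ) (u : ℕ → ℝ) (hpos : ∀ n, 0 < u n) (hu : Tendsto u atTop (𝓝 0)) :
    Tendsto (fun n => ((c - 1 / Real.sqrt (u n) : ℝ) : EReal)) atTop (𝓝 ⊥) := by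
  have h2 : Tendsto (fun n => c - 1 / Real.sqrt (u n)) atTop atBot := by
    simp only [one_div, sub_eq_add_neg]
    exact tendsto_atBot_add_const_left _ c
      (tendsto_neg_atTop_atBot.comp (secant_aux_sqrt_inv hpos hu))
  rw [EReal.tendsto_nhds_bot_iff_real]
  intro x
  filter_upwards [h2.eventually_lt_atBot x] with n hn
  exact_mod_cast hn

lemma secant_main (a b : EReal) (hab : a < b) (α β p q : ℝ)
    (hαβ : α ≤ β) (hp : 0 ≤ p) (hq : 0 ≤ q)
    (Ha : ∀ u : ℕ → ℝ, (∀ n, 0 < u n) → Tendsto u atTop (𝓝 0) →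
      Tendsto (fun n => ((α - p / Real.sqrt (u n) : ℝ) : EReal)) atTop (𝓝 a))
    (Hb : ∀ u : ℕ → ℝ, (∀ n, 0 < u n) → Tendsto u atTop (𝓝 0) →
      Tendsto (fun n => ((β + q / Real.sqrt (u n) : ℝ) : EReal)) atTop (𝓝 b)) :
    ∃ f : ℝ → ℝ, ContinuousOn f (Set.Icc 0 1) ∧
      {L : EReal | IsRightSecantDeriv f L} = Set.Icc a b := by
  set A : ℝ → ℝ := fun x => α - p / Real.sqrt x with hA
  set B : ℝ → ℝ := fun x => β + q / Real.sqrt x with hB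
  set s : ℝ → ℝ := fun x => (A x + B x) / 2 + (B x - A x) / 2 * Real.cos (Real.pi / x) with hs
  set f : ℝ → ℝ := fun x => x * s x with hf
  -- basic facts
  have hdiv : ∀ x : ℝ, 0 < x → 0 ≤ p / Real.sqrt x ∧ 0 ≤ q / Real.sqrt x := fun x hx =>
    ⟨div_nonneg hp (Real.sqrt_nonneg x), div_nonneg hq (Real.sqrt_nonneg x)⟩
  have hAB : ∀ x : ℝ, 0 < x → A x ≤ B x := by
    intro x hx
    have := hdiv x hx
    simp only [hA, hB]
    linarith [this.1, this.2]
  have hs_mem : ∀ x : ℝ, 0 < x → A x ≤ s x ∧ s x ≤ B x := by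
    intro x hx
    have h1 := hAB x hx
    have h2 := Real.neg_one_le_cos (Real.pi / x)
    have h3 := Real.cos_le_one (Real.pi / x)
    have hd : 0 ≤ (B x - A x) / 2 := div_nonneg (sub_nonneg.2 h1) (by norm_num)
    have k1 : 0 ≤ (B x - A x) / 2 * (1 + Real.cos (Real.pi / x)) :=
      mul_nonneg hd (by linarith)
    have k2 : 0 ≤ (B x - A x) / 2 * (1 - Real.cos (Real.pi / x)) :=
      mul_nonneg hd (by linarith)
    constructor <;> · show _ ; simp only [hs]; nlinarith [k1, k2]
  have hscont : ∀ x : ℝ, 0 < x → ContinuousAt s x := by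
    intro x hx
    have hsq : ContinuousAt Real.sqrt x := Real.continuous_sqrt.continuousAt
    have hne : Real.sqrt x ≠ 0 := (Real.sqrt_pos.2 hx).ne'
    have hcA : ContinuousAt A x := continuousAt_const.sub (continuousAt_const.div hsq hne)
    have hcB : ContinuousAt B x := continuousAt_const.add (continuousAt_const.div hsq hne)
    have hcos : ContinuousAt (fun y => Real.cos (Real.pi / y)) x :=
      Real.continuous_cos.continuousAt.comp (continuousAt_const.div continuousAt_id hx.ne')
    exact ((hcA.add hcB).div_const 2).add (((hcB.sub hcA).div_const 2).mul hcos)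
  have hf0 : f 0 = 0 := by simp [hf]
  have hslope : ∀ x : ℝ, 0 < x → (f x - f 0) / x = s x := by
    intro x hx
    rw [hf0, sub_zero, hf]
    exact mul_div_cancel_left₀ _ hx.ne'
  -- special sequences
  set o : ℕ → ℝ := fun n => 1 / (2 * (n : ℝ) + 1) with ho
  set e : ℕ → ℝ := fun n => 1 / (2 * (n : ℝ) + 2) with he
  have hopos : ∀ n, 0 < o n := fun n => by positivity
  have hepos : ∀ n, 0 < e n := fun n => by positivity
  have hole : ∀ n, o n ≤ 1 := fun n => by
    rw [ho]; rw [div_le_one (by positivity)]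
    have : (0:ℝ) ≤ n := Nat.cast_nonneg n
    linarith
  have hele : ∀ n, e n ≤ 1 := fun n => by
    rw [he]; rw [div_le_one (by positivity)]
    have : (0:ℝ) ≤ n := Nat.cast_nonneg n
    linarith
  have heo : ∀ n : ℕ, e n ≤ o n := by
    intro n
    show (1:ℝ) / (2 * (n:ℝ) + 2) ≤ 1 / (2 * (n:ℝ) + 1)
    apply one_div_le_one_div_of_le (by positivity)
    linarith
  have holim : Tendsto o atTop (𝓝 0) := by
    apply squeeze_zero (fun n => (hopos n).le) (g := fun n : ℕ => 1 / ((n : ℝ) + 1))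
    · intro n
      rw [ho]
      apply one_div_le_one_div_of_le (by positivity)
      have : (0:ℝ) ≤ n := Nat.cast_nonneg n
      linarith
    · exact tendsto_one_div_add_atTop_nhds_zero_nat
  have helim : Tendsto e atTop (𝓝 0) := by
    apply squeeze_zero (fun n => (hepos n).le) (g := fun n : ℕ => 1 / ((n : ℝ) + 1))
    · intro n
      rw [he]
      apply one_div_le_one_div_of_le (by positivity)
      have : (0:ℝ) ≤ n := Nat.cast_nonneg n
      linarith
    · exact tendsto_one_div_add_atTop_nhds_zero_nat
  have hs_odd : ∀ n : ℕ, s (o n) = A (o n) := by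
    intro n
    have hx : Real.pi / o n = (n : ℝ) * (2 * Real.pi) + Real.pi := by
      rw [ho]; rw [div_div_eq_mul_div, div_one]; ring
    simp only [hs, hx, Real.cos_nat_mul_two_pi_add_pi]
    ring
  have hs_even : ∀ n : ℕ, s (e n) = B (e n) := by
    intro n
    have hx : Real.pi / e n = ((n : ℝ) + 1) * (2 * Real.pi) := by
      rw [he]; rw [div_div_eq_mul_div, div_one]; ring
    have hcos : Real.cos (Real.pi / e n) = 1 := by
      rw [hx]
      have := Real.cos_nat_mul_two_pi (n + 1)
      push_cast at this
      convert this using 2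
    simp only [hs, hcos]
    ring
  refine ⟨f, ?_, ?_⟩
  · -- continuity
    intro x hx
    rcases eq_or_lt_of_le hx.1 with h0 | h0
    · -- x = 0
      rw [← h0]
      show Tendsto f (𝓝[Set.Icc 0 1] 0) (𝓝 (f 0))
      rw [hf0]
      have hbnd : ∀ᶠ y in 𝓝[Set.Icc 0 1] (0:ℝ),
          ‖f y‖ ≤ (|α| + |β|) * y + (p + q) * Real.sqrt y := by
        apply eventually_nhdsWithin_of_forall
        intro y hy
        rcases eq_or_lt_of_le hy.1 with h0' | h0'
        · rw [← h0', hf0]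
          simp
        · have hy' := h0'
          have hsy := hs_mem y hy'
          have hdy := hdiv y hy'
          have hsq : 0 < Real.sqrt y := Real.sqrt_pos.2 hy'
          have hbound : |s y| ≤ (|α| + |β|) + (p + q) / Real.sqrt y := by
            have hsplit : (p + q) / Real.sqrt y = p / Real.sqrt y + q / Real.sqrt y :=
              add_div p q _
            rw [abs_le]
            constructor
            · have : α - p / Real.sqrt y ≤ s y := hsy.1
              have h1 : -|α| ≤ α := neg_abs_le α
              have h2 : (0:ℝ) ≤ |β| := abs_nonneg β
              rw [hsplit]
              linarith [hdy.1, hdy.2]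
            · have : s y ≤ β + q / Real.sqrt y := hsy.2
              have h1 : β ≤ |β| := le_abs_self β
              have h2 : (0:ℝ) ≤ |α| := abs_nonneg α
              rw [hsplit]
              linarith [hdy.1, hdy.2]
          have : ‖f y‖ = y * |s y| := by
            rw [hf, Real.norm_eq_abs, abs_mul, abs_of_pos hy']
          rw [this]
          calc y * |s y| ≤ y * ((|α| + |β|) + (p + q) / Real.sqrt y) := by
                apply mul_le_mul_of_nonneg_left hbound hy'.le
            _ = (|α| + |β|) * y + (p + q) * (y / Real.sqrt y) := by ring
            _ = (|α| + |β|) * y + (p + q) * Real.sqrt y := by rw [Real.div_sqrt]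
      have htend : Tendsto (fun y : ℝ => (|α| + |β|) * y + (p + q) * Real.sqrt y)
          (𝓝[Set.Icc 0 1] (0:ℝ)) (𝓝 0) := by
        have hg : Continuous fun x : ℝ => (|α| + |β|) * x + (p + q) * Real.sqrt x :=
          (continuous_const.mul continuous_id).add (continuous_const.mul Real.continuous_sqrt)
        have := (hg.tendsto 0).mono_left (nhdsWithin_le_nhds (s := Set.Icc 0 1))
        simpa using this
      exact squeeze_zero_norm' hbnd htend
    · exact (continuousAt_id.mul (hscont x h0)).continuousWithinAt
  · -- set equality
    ext L
    simp only [Set.mem_setOf_eq, Set.mem_Icc]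
    constructor
    · rintro ⟨u, hu0, hu1, hulim, hLlim⟩
      have hLlim' : Tendsto (fun n => ((s (u n) : ℝ) : EReal)) atTop (𝓝 L) :=
        hLlim.congr fun n => by rw [hslope (u n) (hu0 n)]
      have haA := Ha u hu0 hulim
      have haB := Hb u hu0 hulim
      constructor
      · exact le_of_tendsto_of_tendsto' haA hLlim'
          (fun n => EReal.coe_le_coe_iff.2 (hs_mem _ (hu0 n)).1)
      · exact le_of_tendsto_of_tendsto' hLlim' haB
          (fun n => EReal.coe_le_coe_iff.2 (hs_mem _ (hu0 n)).2)
    · rintro ⟨haL, hLb⟩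
      by_cases hLa : L = a
      · subst hLa
        refine ⟨o, hopos, hole, holim, ?_⟩
        apply (Ha o hopos holim).congr
        intro n
        rw [hslope (o n) (hopos n), hs_odd n]
      · by_cases hLb' : L = b
        · subst hLb'
          refine ⟨e, hepos, hele, helim, ?_⟩
          apply (Hb e hepos helim).congr
          intro n
          rw [hslope (e n) (hepos n), hs_even n]
        · have h1 : a < L := lt_of_le_of_ne haL (Ne.symm hLa)
          have h2 : L < b := lt_of_le_of_ne hLb hLb'
          have hLbot : L ≠ ⊥ := (bot_le.trans_lt h1).ne'
          have hLtop : L ≠ ⊤ := (h2.trans_le le_top).ne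
          lift L to ℝ using ⟨hLtop, hLbot⟩ with r
          have hAo := Ha o hopos holim
          have hBe := Hb e hepos helim
          have hev1 : ∀ᶠ n in atTop, A (o n) < r := by
            filter_upwards [hAo.eventually_lt_const h1] with n hn
            exact_mod_cast hn
          have hev2 : ∀ᶠ n in atTop, r < B (e n) := by
            filter_upwards [hBe.eventually_const_lt h2] with n hn
            exact_mod_cast hn
          obtain ⟨N, hN⟩ := (hev1.and hev2).exists_forall_of_atTop
          have key : ∀ n : ℕ, ∃ x, x ∈ Set.Icc (e (n + N)) (o (n + N)) ∧ s x = r := by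
            intro n
            set k := n + N with hk
            have hko := (hN k (Nat.le_add_left N n)).1
            have hke := (hN k (Nat.le_add_left N n)).2
            have hcont : ContinuousOn s (Set.Icc (e k) (o k)) := fun x hx =>
              (hscont x (lt_of_lt_of_le (hepos k) hx.1)).continuousWithinAt
            have hmem : r ∈ Set.Icc (s (o k)) (s (e k)) := by
              rw [hs_odd, hs_even]
              exact ⟨hko.le, hke.le⟩
            obtain ⟨x, hx1, hx2⟩ := intermediate_value_Icc' (heo k) hcont hmem
            exact ⟨x, hx1, hx2⟩
          choose x hx1 hx2 using key
          have hxpos : ∀ n, 0 < x n := fun n => lt_of_lt_of_le (hepos _) (hx1 n).1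
          refine ⟨x, hxpos, fun n => le_trans (hx1 n).2 (hole _), ?_, ?_⟩
          · apply squeeze_zero (fun n => (hxpos n).le) (fun n => (hx1 n).2)
            exact holim.comp (tendsto_add_atTop_nat N)
          · have : ∀ n, (((f (x n) - f 0) / x n : ℝ) : EReal) = (r : EReal) := by
              intro n
              rw [hslope (x n) (hxpos n), hx2 n]
            simp only [this]
            exact tendsto_const_nhds

theorem closed_interval_is_secant_deriv_set_of_continuous (a b : EReal) (hab : a < b) :
    ∃ f : ℝ → ℝ, ContinuousOn f (Set.Icc 0 1) ∧
      {L : EReal | IsRightSecantDeriv f L} = Set.Icc a b := by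
  induction a using EReal.rec with
  | top => exact absurd hab (not_top_lt)
  | bot =>
    induction b using EReal.rec with
    | bot => exact absurd hab (lt_irrefl _)
    | top =>
      refine secant_main ⊥ ⊤ hab 0 0 1 1 le_rfl zero_le_one zero_le_one ?_ ?_
      · intro u hpos hu
        simpa using secant_aux_bot 0 u hpos hu
      · intro u hpos hu
        simpa using secant_aux_top 0 u hpos hu
    | coe r =>
      refine secant_main ⊥ r hab r r 1 0 le_rfl zero_le_one le_rfl ?_ ?_
      · intro u hpos hu
        simpa using secant_aux_bot r u hpos hu
      · intro u hpos hu
        simp only [zero_div, add_zero]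
        exact tendsto_const_nhds
  | coe r =>
    induction b using EReal.rec with
    | bot => exact absurd hab (not_lt_bot)
    | top =>
      refine secant_main r ⊤ hab r r 0 1 le_rfl le_rfl zero_le_one ?_ ?_
      · intro u hpos hu
        simp only [zero_div, sub_zero]
        exact tendsto_const_nhds
      · intro u hpos hu
        simpa using secant_aux_top r u hpos hu
    | coe r' =>
      refine secant_main r r' hab r r' 0 0 (by exact_mod_cast hab.le) le_rfl le_rfl ?_ ?_
      · intro u hpos hu
        simp only [zero_div, sub_zero]
        exact tendsto_const_nhds
      · intro u hpos hu
        simp only [zero_div, add_zero]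
        exact tendsto_const_nhds
end

section
/- The continuous function f : [0,1] → ℝ defined by f(x) = √x · sin(1/x) for x > 0 and f(0) = 0 has the property that every extended real number is a right-hand sequential secant derivative of f at 0. -/
/-!
Substituting `x = 1/t`, the secant slope `f(x)/x` becomes `g t = √t · sin t`. On each
interval `[a, a + π]` with `sin a = 1` the continuous function `g` runs from `√a` down to
`-√(a + π)`, so by the intermediate value theorem it takes every value `c` with `|c| ≤ √a`
there; for `a → ∞` this gives every real slope along some `t → ∞`, and the endpoints
themselves give `±∞`.
-/

open Filter Topology

open Real

lemma isRightSecantDeriv_of_tendsto_inv {f : ℝ → ℝ} {L : EReal} {t : ℕ → ℝ}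
    (ht : ∀ n, 1 ≤ t n) (htop : Tendsto t atTop atTop)
    (hL : Tendsto (fun n => (((f (t n)⁻¹ - f 0) * t n : ℝ) : EReal)) atTop (𝓝 L)) :
    IsRightSecantDeriv f L :=
  ⟨fun n => (t n)⁻¹, fun n => inv_pos.2 (one_pos.trans_le (ht n)),
    fun n => inv_le_one_of_one_le₀ (ht n), htop.inv_tendsto_atTop,
    by simpa only [div_inv_eq_mul] using hL⟩

-- The case split is redundant: `√0 = 0` (and `1 / 0 = 0`).
lemma ite_eq_sqrt_mul_sin_inv :
    (fun x : ℝ => if x = 0 then 0 else √x * sin (1 / x)) = fun x => √x * sin (1 / x) := by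
  funext x
  split_ifs with hx <;> simp [hx]

lemma continuous_sqrt_mul_sin_inv : Continuous fun x : ℝ => √x * sin (1 / x) := by
  refine continuous_iff_continuousAt.2 fun x => ?_
  rcases eq_or_ne x 0 with rfl | hx
  · have hbound : ∀ y : ℝ, ‖√y * sin (1 / y)‖ ≤ √y := fun y => by
      rw [norm_mul, norm_of_nonneg (sqrt_nonneg y)]
      exact mul_le_of_le_one_right (sqrt_nonneg y) (abs_sin_le_one _)
    have hsqrt : Tendsto (√·) (𝓝 0) (𝓝 0) := by
      simpa using continuous_sqrt.tendsto 0
    simpa [ContinuousAt] using squeeze_zero_norm hbound hsqrt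
  · exact continuous_sqrt.continuousAt.mul
      (continuous_sin.continuousAt.comp (continuousAt_const.div continuousAt_id hx))

lemma sqrt_mul_sin_inv_secant (t : ℝ) :
    (√t⁻¹ * sin (1 / t⁻¹) - √0 * sin (1 / 0)) * t = √t * sin t := by
  rw [sqrt_inv, one_div, inv_inv, sqrt_zero, zero_mul, sub_zero, mul_right_comm,
    ← div_eq_inv_mul, div_sqrt]

lemma exists_sqrt_mul_sin_eq {a c : ℝ} (ha : sin a = 1) (hc : |c| ≤ √a) :
    ∃ t ∈ Set.Icc a (a + π), √t * sin t = c := by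
  have hab : a ≤ a + π := le_add_of_nonneg_right pi_pos.le
  have hleft : √a * sin a = √a := by rw [ha, mul_one]
  have hright : √(a + π) * sin (a + π) = -√(a + π) := by rw [sin_add_pi, ha, mul_neg_one]
  have hg : Continuous fun t => √t * sin t := by fun_prop
  refine intermediate_value_Icc' hab hg.continuousOn ⟨?_, ?_⟩
  · rw [hright]
    linarith [neg_abs_le c, sqrt_le_sqrt hab]
  · rw [hleft]
    exact (le_abs_self c).trans hc

noncomputable def sinPeak (n : ℕ) : ℝ := π / 2 + n * (2 * π)

lemma sin_sinPeak (n : ℕ) : sin (sinPeak n) = 1 := by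
  rw [sinPeak, sin_add_nat_mul_two_pi, sin_pi_div_two]

lemma one_le_sinPeak (n : ℕ) : 1 ≤ sinPeak n := by
  have : (0 : ℝ) ≤ n * (2 * π) := by positivity
  rw [sinPeak]
  linarith [pi_gt_three]

lemma tendsto_sinPeak : Tendsto sinPeak atTop atTop :=
  tendsto_atTop_add_const_left _ _ (tendsto_natCast_atTop_atTop.atTop_mul_const (by positivity))

lemma isRightSecantDeriv_sqrt_mul_sin_inv {L : EReal} {t : ℕ → ℝ} (ht : ∀ n, 1 ≤ t n)
    (htop : Tendsto t atTop atTop)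
    (hL : Tendsto (fun n => ((√(t n) * sin (t n) : ℝ) : EReal)) atTop (𝓝 L)) :
    IsRightSecantDeriv (fun x => √x * sin (1 / x)) L :=
  isRightSecantDeriv_of_tendsto_inv ht htop <| by
    simpa only [sqrt_mul_sin_inv_secant] using hL

lemma isRightSecantDeriv_sqrt_mul_sin_inv_top :
    IsRightSecantDeriv (fun x => √x * sin (1 / x)) ⊤ := by
  refine isRightSecantDeriv_sqrt_mul_sin_inv one_le_sinPeak tendsto_sinPeak ?_
  simpa only [sin_sinPeak, mul_one, EReal.tendsto_coe_nhds_top_iff, Function.comp_def]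
    using tendsto_sqrt_atTop.comp tendsto_sinPeak

lemma isRightSecantDeriv_sqrt_mul_sin_inv_bot :
    IsRightSecantDeriv (fun x => √x * sin (1 / x)) ⊥ := by
  have htop : Tendsto (fun n => sinPeak n + π) atTop atTop :=
    tendsto_atTop_add_const_right _ _ tendsto_sinPeak
  refine isRightSecantDeriv_sqrt_mul_sin_inv
    (fun n => (one_le_sinPeak n).trans (le_add_of_nonneg_right pi_pos.le)) htop ?_
  simpa only [sin_add_pi, sin_sinPeak, mul_neg_one, EReal.tendsto_coe_nhds_bot_iff,
      Function.comp_def]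
    using tendsto_neg_atTop_atBot.comp (tendsto_sqrt_atTop.comp htop)

lemma isRightSecantDeriv_sqrt_mul_sin_inv_coe (c : ℝ) :
    IsRightSecantDeriv (fun x => √x * sin (1 / x)) c := by
  obtain ⟨N, hN⟩ := (tendsto_sinPeak.eventually_ge_atTop (c ^ 2)).exists_forall_of_atTop
  have hpeak (n : ℕ) :
      ∃ t ∈ Set.Icc (sinPeak (n + N)) (sinPeak (n + N) + π), √t * sin t = c :=
    exists_sqrt_mul_sin_eq (sin_sinPeak _) (abs_le_sqrt (hN _ (Nat.le_add_left N n)))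
  choose t ht htc using hpeak
  refine isRightSecantDeriv_sqrt_mul_sin_inv (fun n => (one_le_sinPeak _).trans (ht n).1)
    (tendsto_atTop_mono (fun n => (ht n).1) (tendsto_sinPeak.comp (tendsto_add_atTop_nat N))) ?_
  simp only [htc, tendsto_const_nhds]

theorem sqrt_sin_all_secant_derivs :
    ContinuousOn (fun x : ℝ => if x = 0 then 0 else Real.sqrt x * Real.sin (1 / x))
      (Set.Icc 0 1) ∧
    ∀ L : EReal,
      IsRightSecantDeriv (fun x : ℝ => if x = 0 then 0 else Real.sqrt x * Real.sin (1 / x)) L := by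
  rw [ite_eq_sqrt_mul_sin_inv]
  refine ⟨continuous_sqrt_mul_sin_inv.continuousOn, fun L => ?_⟩
  induction L using EReal.rec with
  | bot => exact isRightSecantDeriv_sqrt_mul_sin_inv_bot
  | coe c => exact isRightSecantDeriv_sqrt_mul_sin_inv_coe c
  | top => exact isRightSecantDeriv_sqrt_mul_sin_inv_top
end

section
/- Let f : ℝ → ℝ be continuous at x and suppose there is L ∈ ℝ such that for all sequences h_n, k_n of positive reals tending to 0, (f(x + h_n) − f(x − k_n))/(h_n + k_n) → L. Then f is differentiable at x with f'(x) = L. -/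
open Filter Topology

theorem deriv_of_all_cord_derivs_eq (f : ℝ → ℝ) (x : ℝ) (hf : ContinuousAt f x) (L : ℝ)
    (hcord : ∀ h k : ℕ → ℝ, (∀ n, 0 < h n) → (∀ n, 0 < k n) →
      Tendsto h atTop (𝓝 0) → Tendsto k atTop (𝓝 0) →
      Tendsto (fun n => (f (x + h n) - f (x - k n)) / (h n + k n)) atTop (𝓝 L)) :
    HasDerivAt f L x := by
  have key : ∀ u : ℕ → ℝ, (∀ n, u n ≠ 0) → Tendsto u atTop (𝓝 0) →
      Tendsto (fun n => (f (x + u n) - f x) / u n) atTop (𝓝 L) := by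
    intro u hune hu0
    have hεpos : ∀ n : ℕ, 0 < |u n| / (n + 1) := fun n => by
      have := abs_pos.mpr (hune n); positivity
    have hcont : ∀ n : ℕ, ∃ δ > 0, ∀ t : ℝ, |t - x| < δ → |f t - f x| < |u n| / (n + 1) := by
      intro n
      rcases Metric.continuousAt_iff.mp hf _ (hεpos n) with ⟨δ, hδ, hδ'⟩
      exact ⟨δ, hδ, fun t ht => by simpa [Real.dist_eq] using hδ' (by simpa [Real.dist_eq] using ht)⟩
    choose δ hδ hδ' using hcont
    set h : ℕ → ℝ := fun n => if 0 < u n then u n else min (δ n / 2) (|u n| / (n + 1)) with hhdef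
    set k : ℕ → ℝ := fun n => if 0 < u n then min (δ n / 2) (|u n| / (n + 1)) else -u n with hkdef
    have hminpos : ∀ n, 0 < min (δ n / 2) (|u n| / (n + 1)) :=
      fun n => lt_min (by linarith [hδ n]) (hεpos n)
    have hp : ∀ n, 0 < h n := by
      intro n; by_cases hun : 0 < u n
      · simpa [hhdef, hun] using hun
      · simpa [hhdef, hun] using hminpos n
    have kp : ∀ n, 0 < k n := by
      intro n; by_cases hun : 0 < u n
      · simpa [hkdef, hun] using hminpos n
      · have : u n < 0 := lt_of_le_of_ne (not_lt.mp hun) (hune n)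
        simp [hkdef, hun]; linarith
    have hmin_le : ∀ n, min (δ n / 2) (|u n| / (n + 1)) ≤ |u n| := by
      intro n
      refine (min_le_right _ _).trans ?_
      have h1 : (1:ℝ) ≤ n + 1 := by
        have : (0:ℝ) ≤ n := Nat.cast_nonneg n
        linarith
      calc |u n| / (n + 1) ≤ |u n| / 1 :=
            div_le_div_of_nonneg_left (abs_nonneg _) one_pos h1
        _ = |u n| := by ring
    have hb : ∀ n, h n ≤ |u n| := by
      intro n; by_cases hun : 0 < u n
      · simp [hhdef, hun, le_abs_self]
      · simpa [hhdef, hun] using hmin_le n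
    have kb : ∀ n, k n ≤ |u n| := by
      intro n; by_cases hun : 0 < u n
      · simpa [hkdef, hun] using hmin_le n
      · simp [hkdef, hun, neg_le_abs]
    have hu0' : Tendsto (fun n => |u n|) atTop (𝓝 0) := by
      simpa using hu0.abs
    have hh0 : Tendsto h atTop (𝓝 0) :=
      squeeze_zero (fun n => (hp n).le) hb hu0'
    have hk0 : Tendsto k atTop (𝓝 0) :=
      squeeze_zero (fun n => (kp n).le) kb hu0'
    set q : ℕ → ℝ := fun n => (f (x + h n) - f (x - k n)) / (h n + k n) with hqdef
    have hq : Tendsto q atTop (𝓝 L) := hcord h k hp kp hh0 hk0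
    have hest : ∀ n, |(f (x + u n) - f x) / u n - q n| ≤ (|q n| + 1) * (1 / (n + 1)) := by
      intro n
      have hpn := hp n
      have kpn := kp n
      have hD : 0 < h n + k n := add_pos hpn kpn
      have hn1 : (0:ℝ) < n + 1 := by positivity
      by_cases hun : 0 < u n
      · -- positive case : h n = u n
        have hh : h n = u n := by simp [hhdef, hun]
        have habs : |u n| = h n := by rw [hh, abs_of_pos hun]
        have hkle : k n ≤ h n / (n + 1) := by
          have : k n ≤ |u n| / (n + 1) := by
            simpa [hkdef, hun] using min_le_right (δ n / 2) (|u n| / (n + 1))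
          rwa [habs] at this
        have hE : |f x - f (x - k n)| ≤ h n / (n + 1) := by
          have hlt : |(x - k n) - x| < δ n := by
            rw [show (x - k n) - x = -(k n) by ring, abs_neg, abs_of_pos kpn]
            have : k n ≤ δ n / 2 := by
              simpa [hkdef, hun] using min_le_left (δ n / 2) (|u n| / (n + 1))
            linarith [hδ n]
          have := hδ' n _ hlt
          rw [habs] at this
          rw [abs_sub_comm]
          linarith
        have hid : (f (x + u n) - f x) / u n - q n
            = (q n * k n - (f x - f (x - k n))) / h n := by
          rw [hqdef, ← hh]
          field_simp
          ring
        rw [hid, abs_div, abs_of_pos hpn, div_le_iff₀ hpn]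
        calc |q n * k n - (f x - f (x - k n))|
            ≤ |q n| * k n + |f x - f (x - k n)| := by
              refine (abs_sub _ _).trans ?_
              rw [abs_mul, abs_of_pos kpn]
          _ ≤ |q n| * (h n / (n + 1)) + h n / (n + 1) := by gcongr
          _ = (|q n| + 1) * (1 / (n + 1)) * h n := by field_simp
      · -- negative case : k n = -u n
        have hkn : k n = -u n := by simp [hkdef, hun]
        have hun' : u n < 0 := lt_of_le_of_ne (not_lt.mp hun) (hune n)
        have habs : |u n| = k n := by rw [hkn, abs_of_neg hun']
        have hhle : h n ≤ k n / (n + 1) := by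
          have : h n ≤ |u n| / (n + 1) := by
            simpa [hhdef, hun] using min_le_right (δ n / 2) (|u n| / (n + 1))
          rwa [habs] at this
        have hA : |f (x + h n) - f x| ≤ k n / (n + 1) := by
          have hlt : |(x + h n) - x| < δ n := by
            rw [show (x + h n) - x = h n by ring, abs_of_pos hpn]
            have : h n ≤ δ n / 2 := by
              simpa [hhdef, hun] using min_le_left (δ n / 2) (|u n| / (n + 1))
            linarith [hδ n]
          have := hδ' n _ hlt
          rw [habs] at this
          linarith
        have hxu : x + u n = x - k n := by rw [hkn]; ring
        have hun0 : u n = -(k n) := by rw [hkn]; ring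
        have hid : (f (x + u n) - f x) / u n - q n
            = (q n * h n - (f (x + h n) - f x)) / k n := by
          rw [hqdef, hxu, hun0]
          field_simp [kpn.ne', hD.ne']
          ring
        rw [hid, abs_div, abs_of_pos kpn, div_le_iff₀ kpn]
        calc |q n * h n - (f (x + h n) - f x)|
            ≤ |q n| * h n + |f (x + h n) - f x| := by
              refine (abs_sub _ _).trans ?_
              rw [abs_mul, abs_of_pos hpn]
          _ ≤ |q n| * (k n / (n + 1)) + k n / (n + 1) := by gcongr
          _ = (|q n| + 1) * (1 / (n + 1)) * k n := by field_simp
    have hbnd : Tendsto (fun n : ℕ => (|q n| + 1) * (1 / (n + 1))) atTop (𝓝 0) := by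
      have h1 : Tendsto (fun n : ℕ => |q n| + 1) atTop (𝓝 (|L| + 1)) :=
        hq.abs.add tendsto_const_nhds
      have h2 := h1.mul tendsto_one_div_add_atTop_nhds_zero_nat
      simpa using h2
    have hdiff : Tendsto (fun n => (f (x + u n) - f x) / u n - q n) atTop (𝓝 0) :=
      squeeze_zero_norm hest hbnd
    have := hq.add hdiff
    simpa using this
  rw [hasDerivAt_iff_tendsto_slope]
  rw [tendsto_iff_seq_tendsto]
  intro w hw
  rw [tendsto_nhdsWithin_iff] at hw
  obtain ⟨hwx, hwne⟩ := hw
  set u : ℕ → ℝ := fun n => if w n = x then 1 / (n + 1 : ℝ) else w n - x with hudef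
  have hune : ∀ n, u n ≠ 0 := by
    intro n; by_cases hwn : w n = x <;> simp [hudef, hwn]
    · positivity
    · exact sub_ne_zero.mpr hwn
  have hu0 : Tendsto u atTop (𝓝 0) := by
    apply Tendsto.congr' (f₁ := fun n => w n - x)
    · filter_upwards [hwne] with n hn
      have hn' : w n ≠ x := hn
      simp [hudef, hn']
    · simpa using hwx.sub_const x
  have := key u hune hu0
  refine this.congr' ?_
  filter_upwards [hwne] with n hn
  have hn' : w n ≠ x := hn
  have hu : u n = w n - x := by simp [hudef, hn']
  simp [Function.comp, slope_def_field, hu]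
end

section
/- The set of sequential cord derivatives of f at x is a closed subset of the extended real line: if L_n are real sequential cord derivatives of f at x and L_n → L in the extended reals, then L is a sequential cord derivative of f at x. -/
open Filter Topology

/-- `L` is a sequential cord derivative of `f` at `x` (with domain `D`). -/
def IsSeqCordDeriv (D : Set ℝ) (f : ℝ → ℝ) (x : ℝ) (L : EReal) : Prop :=
  ∃ h k : ℕ → ℝ, (∀ n, 0 < h n) ∧ (∀ n, 0 < k n) ∧
    Tendsto h atTop (𝓝 0) ∧ Tendsto k atTop (𝓝 0) ∧
    (∀ n, x + h n ∈ D) ∧ (∀ n, x - k n ∈ D) ∧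
    Tendsto (fun n => (((f (x + h n) - f (x - k n)) / (h n + k n) : ℝ) : EReal)) atTop (𝓝 L)

theorem cord_derivs_closed (D : Set ℝ) (f : ℝ → ℝ) (x : ℝ)
    (Lseq : ℕ → ℝ) (hL : ∀ n, IsSeqCordDeriv D f x (Lseq n)) (L : EReal)
    (hlim : Tendsto (fun n => ((Lseq n : ℝ) : EReal)) atTop (𝓝 L)) :
    IsSeqCordDeriv D f x L := by
  choose h k hpos kpos hlim0 klim0 hmem kmem hq using hL
  -- for each n, pick an index m n with all three smallness conditions
  have key : ∀ n : ℕ, ∃ m : ℕ, h n m < 1 / (n + 1) ∧ k n m < 1 / (n + 1) ∧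
      |(f (x + h n m) - f (x - k n m)) / (h n m + k n m) - Lseq n| < 1 / (n + 1) := by
    intro n
    have hε : (0 : ℝ) < 1 / (n + 1) := by positivity
    have e1 : ∀ᶠ m in atTop, h n m < 1 / (n + 1) :=
      (hlim0 n).eventually (eventually_lt_nhds hε)
    have e2 : ∀ᶠ m in atTop, k n m < 1 / (n + 1) :=
      (klim0 n).eventually (eventually_lt_nhds hε)
    have hq' : Tendsto (fun m => (f (x + h n m) - f (x - k n m)) / (h n m + k n m))
        atTop (𝓝 (Lseq n)) := by
      have := hq n
      rwa [EReal.tendsto_coe] at this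
    have e3 : ∀ᶠ m in atTop,
        |(f (x + h n m) - f (x - k n m)) / (h n m + k n m) - Lseq n| < 1 / (n + 1) := by
      filter_upwards [hq' (Metric.ball_mem_nhds (Lseq n) hε)] with m hm
      simpa [Real.dist_eq] using hm
    exact (e1.and (e2.and e3)).exists.imp fun m hm => ⟨hm.1, hm.2.1, hm.2.2⟩
  choose m hm1 hm2 hm3 using key
  refine ⟨fun n => h n (m n), fun n => k n (m n), fun n => hpos n (m n), fun n => kpos n (m n),
    ?_, ?_, fun n => hmem n (m n), fun n => kmem n (m n), ?_⟩
  · exact squeeze_zero (fun n => (hpos n (m n)).le) (fun n => (hm1 n).le)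
      tendsto_one_div_add_atTop_nhds_zero_nat
  · exact squeeze_zero (fun n => (kpos n (m n)).le) (fun n => (hm2 n).le)
      tendsto_one_div_add_atTop_nhds_zero_nat
  · set Q : ℕ → ℝ := fun n => (f (x + h n (m n)) - f (x - k n (m n))) / (h n (m n) + k n (m n))
    have hdiff : Tendsto (fun n => Q n - Lseq n) atTop (𝓝 0) := by
      apply squeeze_zero_norm (fun n => (hm3 n).le) tendsto_one_div_add_atTop_nhds_zero_nat
    have hErealdiff : Tendsto (fun n => ((Q n - Lseq n : ℝ) : EReal)) atTop (𝓝 (0 : EReal)) := by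
      rw [show ((0 : EReal)) = ((0 : ℝ) : EReal) by simp, EReal.tendsto_coe]
      exact hdiff
    have hadd : Tendsto (fun n => ((Lseq n : ℝ) : EReal) + ((Q n - Lseq n : ℝ) : EReal))
        atTop (𝓝 (L + 0)) := by
      have hc : ContinuousAt (fun p : EReal × EReal => p.1 + p.2) (L, 0) :=
        EReal.continuousAt_add (by simp) (by simp)
      exact hc.tendsto.comp (hlim.prodMk_nhds hErealdiff)
    have heq : (fun n => ((Q n : ℝ) : EReal)) =
        fun n => ((Lseq n : ℝ) : EReal) + ((Q n - Lseq n : ℝ) : EReal) := by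
      funext n; rw [← EReal.coe_add]; norm_num
    rw [show (fun n => (((f (x + h n (m n)) - f (x - k n (m n))) /
        (h n (m n) + k n (m n)) : ℝ) : EReal)) = fun n => ((Q n : ℝ) : EReal) from rfl, heq]
    simpa using hadd
end

section
/- If f is continuous at x, then every sequential secant derivative of f at x is also a sequential cord derivative of f at x. -/
/-!
A secant through `x` and `x + s` is the limit of cords through `x + s` and a point `x ∓ ε` on the
other side of `x`, as `ε → 0⁺`, because `f` is continuous at `x`. Replacing the `n`-th secant by
such a cord within `1 / (n + 1)` of it gives cords whose slopes still tend to `L`.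
-/

open Filter Topology

theorem EReal.tendsto_coe_of_tendsto_sub_zero {α : Type*} {l : Filter α} {u v : α → ℝ} {L : EReal}
    (hu : Tendsto (fun n => (u n : EReal)) l (𝓝 L)) (hvu : Tendsto (fun n => v n - u n) l (𝓝 0)) :
    Tendsto (fun n => (v n : EReal)) l (𝓝 L) := by
  have hsum : Tendsto (fun n => (u n : EReal) + ((v n - u n : ℝ) : EReal)) l (𝓝 (L + 0)) :=
    (EReal.continuousAt_add (p := (L, 0)) (by simp) (by simp)).tendsto.comp
      (hu.prodMk_nhds (EReal.tendsto_coe.2 hvu))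
  simpa only [← EReal.coe_add, add_sub_cancel, add_zero] using hsum

theorem ContinuousAt.exists_mem_Ioo_dist_lt {α : Type*} [PseudoMetricSpace α] {g : ℝ → α}
    (hg : ContinuousAt g 0) {δ : ℝ} (hδ : 0 < δ) : ∃ e ∈ Set.Ioo 0 δ, dist (g e) (g 0) < δ :=
  (((hg.tendsto.mono_left nhdsWithin_le_nhds).eventually (Metric.ball_mem_nhds _ hδ)).and
    (Ioo_mem_nhdsGT hδ)).exists.imp fun _ ⟨hclose, he⟩ => ⟨he, hclose⟩

variable {f : ℝ → ℝ} {x : ℝ}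

theorem continuousAt_cord_slope_left_zero (hf : ContinuousAt f x) {s : ℝ} (hs : s ≠ 0) :
    ContinuousAt (fun e => (f (x + s) - f (x - e)) / (s + e)) 0 :=
  (continuousAt_const.sub (hf.comp_of_eq (by fun_prop) (by simp))).div (by fun_prop) (by simpa)

theorem continuousAt_cord_slope_right_zero (hf : ContinuousAt f x) {k : ℝ} (hk : k ≠ 0) :
    ContinuousAt (fun e => (f (x + e) - f (x - k)) / (e + k)) 0 :=
  ((hf.comp_of_eq (by fun_prop) (by simp)).sub continuousAt_const).div (by fun_prop) (by simpa)

theorem exists_cord_slope_near_secant_slope (hf : ContinuousAt f x) {s δ : ℝ} (hs : s ≠ 0)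
    (hδ : 0 < δ) :
    ∃ a b : ℝ, 0 < a ∧ 0 < b ∧ a + b ≤ |s| + δ ∧
      |(f (x + a) - f (x - b)) / (a + b) - (f (x + s) - f x) / s| < δ := by
  rcases hs.lt_or_gt with hneg | hpos
  · obtain ⟨e, ⟨he, heδ⟩, hclose⟩ :=
      (continuousAt_cord_slope_right_zero hf (neg_ne_zero.2 hs)).exists_mem_Ioo_dist_lt hδ
    refine ⟨e, -s, he, by linarith, by rw [abs_of_neg hneg]; linarith, ?_⟩
    have hsecant : (f (x + s) - f x) / s = (f (x + 0) - f (x - -s)) / (0 + -s) := by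
      rw [add_zero, sub_neg_eq_add, zero_add, div_neg, ← neg_div, neg_sub]
    rw [hsecant, ← Real.dist_eq]
    exact hclose
  · obtain ⟨e, ⟨he, heδ⟩, hclose⟩ :=
      (continuousAt_cord_slope_left_zero hf hs).exists_mem_Ioo_dist_lt hδ
    refine ⟨s, e, hpos, he, by rw [abs_of_pos hpos]; linarith, ?_⟩
    simpa [Real.dist_eq] using hclose

theorem secant_deriv_is_cord_deriv (f : ℝ → ℝ) (x : ℝ) (hf : ContinuousAt f x) (L : EReal)
    (hsec : ∃ h : ℕ → ℝ, (∀ n, h n ≠ 0) ∧ Tendsto h atTop (𝓝 0) ∧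
      Tendsto (fun n => (((f (x + h n) - f x) / h n : ℝ) : EReal)) atTop (𝓝 L)) :
    ∃ h k : ℕ → ℝ, (∀ n, 0 < h n) ∧ (∀ n, 0 < k n) ∧
      Tendsto h atTop (𝓝 0) ∧ Tendsto k atTop (𝓝 0) ∧
      Tendsto (fun n => (((f (x + h n) - f (x - k n)) / (h n + k n) : ℝ) : EReal)) atTop (𝓝 L) := by
  obtain ⟨h, hne, h0, hsecant⟩ := hsec
  choose a b ha hb hab hclose using fun n : ℕ =>
    exists_cord_slope_near_secant_slope hf (hne n) (Nat.one_div_pos_of_nat (n := n))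
  have hδ : Tendsto (fun n : ℕ => 1 / ((n : ℝ) + 1)) atTop (𝓝 0) :=
    tendsto_one_div_add_atTop_nhds_zero_nat
  have hsum : Tendsto (fun n => |h n| + 1 / ((n : ℝ) + 1)) atTop (𝓝 0) := by
    simpa using h0.abs.add hδ
  refine ⟨a, b, ha, hb, ?_, ?_, ?_⟩
  · exact squeeze_zero (fun n => (ha n).le) (fun n => by linarith [hab n, hb n]) hsum
  · exact squeeze_zero (fun n => (hb n).le) (fun n => by linarith [hab n, ha n]) hsum
  · exact EReal.tendsto_coe_of_tendsto_sub_zero hsecant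
      (squeeze_zero_norm (fun n => (hclose n).le) hδ)
end

section
/- Suppose h_{i_n}/(h_{i_n} + k_{j_n}) → r, f(h_n)/h_n → R, and f(−k_n)/(−k_n) → L with R, L real and 0 ≤ r ≤ 1, where h_{i_n}, k_{j_n} are subsequences of positive sequences h_n, k_n tending to 0 and f(0) = 0. Then (f(h_{i_n}) − f(−k_{j_n}))/(h_{i_n} + k_{j_n}) → rR + (1 − r)L. -/
open Filter Topology

theorem cord_quotient_convex_combination (h k : ℕ → ℝ) (f : ℝ → ℝ) (R L r : ℝ)
    (hhpos : ∀ n, 0 < h n) (hkpos : ∀ n, 0 < k n)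
    (hh : Tendsto h atTop (𝓝 0)) (hk : Tendsto k atTop (𝓝 0))
    (hf0 : f 0 = 0) (hr0 : 0 ≤ r) (hr1 : r ≤ 1)
    (i j : ℕ → ℕ) (hi : StrictMono i) (hj : StrictMono j)
    (hratio : Tendsto (fun n => h (i n) / (h (i n) + k (j n))) atTop (𝓝 r))
    (hR : Tendsto (fun n => f (h n) / h n) atTop (𝓝 R))
    (hL : Tendsto (fun n => f (-k n) / (-k n)) atTop (𝓝 L)) :
    Tendsto (fun n => (f (h (i n)) - f (-k (j n))) / (h (i n) + k (j n))) atTop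
      (𝓝 (r * R + (1 - r) * L)) := by
  have hR' : Tendsto (fun n => f (h (i n)) / h (i n)) atTop (𝓝 R) :=
    hR.comp hi.tendsto_atTop
  have hL' : Tendsto (fun n => f (-k (j n)) / (-k (j n))) atTop (𝓝 L) :=
    hL.comp hj.tendsto_atTop
  have key : ∀ n, (f (h (i n)) - f (-k (j n))) / (h (i n) + k (j n)) =
      (h (i n) / (h (i n) + k (j n))) * (f (h (i n)) / h (i n)) +
      (1 - h (i n) / (h (i n) + k (j n))) * (f (-k (j n)) / (-k (j n))) := by
    intro n
    have h1 := hhpos (i n)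
    have h2 := hkpos (j n)
    have hs : h (i n) + k (j n) ≠ 0 := by positivity
    field_simp
    ring
  simp only [key]
  have := (hratio.mul hR').add (((tendsto_const_nhds (x := (1:ℝ))).sub hratio).mul hL')
  simpa using this
end

section
/- Let a, b, m > 0 be reals, and p, q : ℕ → ℝ increasing functions with p(n)/n^m → a and q(n)/n^m → b. Set h_n = 1/p(n), k_n = 1/q(n). Let f satisfy f(0) = 0, f(h_n)/h_n → R, f(−k_n)/(−k_n) → L with R, L real. Then every real number K between L and R is a sequential cord derivative of f at 0, i.e., there exist subsequences h_{i_n}, k_{j_n} with (f(h_{i_n}) − f(−k_{j_n}))/(h_{i_n} + k_{j_n}) → K. -/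
open Filter Topology

/-!
With `h = 1 / P` and `k = 1 / Q`, the cord quotient `(f h - f (-k)) / (h + k)` is the convex
combination `(1 - w) * (f h / h) + w * (f (-k) / (-k))` with weight `w = P / (P + Q)`.
Taking `P = p (i n)`, `Q = q (j n)` with `i n ≈ ξ n²` and `j n ≈ (1 - ξ) n²`, the polynomial growth
of `p` and `q` makes `w` tend to `a ξ^m / (a ξ^m + b (1 - ξ)^m)`, which moves continuously from `0`
to `1` as `ξ` runs over `[0, 1]`; the intermediate value theorem then picks `ξ` for the given `K`.
-/

theorem cord_quotient_eq_weighted_sum {P Q : ℝ} (hP : 0 < P) (hQ : 0 < Q) (x y : ℝ) :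
    (x - y) / (1 / P + 1 / Q) =
      (1 - P / (P + Q)) * (x / (1 / P)) + P / (P + Q) * (y / -(1 / Q)) := by
  field_simp
  ring

theorem tendsto_cord_quotient {α : Type*} {l : Filter α} {f : ℝ → ℝ} {R L μ : ℝ}
    {P Q : α → ℝ} (hP : ∀ᶠ x in l, 0 < P x) (hQ : ∀ᶠ x in l, 0 < Q x)
    (hR : Tendsto (fun x => f (1 / P x) / (1 / P x)) l (𝓝 R))
    (hL : Tendsto (fun x => f (-(1 / Q x)) / (-(1 / Q x))) l (𝓝 L))
    (hμ : Tendsto (fun x => P x / (P x + Q x)) l (𝓝 μ)) :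
    Tendsto (fun x => (f (1 / P x) - f (-(1 / Q x))) / (1 / P x + 1 / Q x)) l
      (𝓝 ((1 - μ) * R + μ * L)) := by
  refine (((tendsto_const_nhds.sub hμ).mul hR).add (hμ.mul hL)).congr' ?_
  filter_upwards [hP, hQ] with x hPx hQx
  exact (cord_quotient_eq_weighted_sum hPx hQx _ _).symm

theorem eventually_pos_of_tendsto_div_rpow {p : ℕ → ℝ} {a m : ℝ} (ha : 0 < a)
    (hpa : Tendsto (fun n => p n / (n : ℝ) ^ m) atTop (𝓝 a)) : ∀ᶠ n in atTop, 0 < p n := by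
  filter_upwards [hpa.eventually (lt_mem_nhds ha)] with n hn
  rcases div_pos_iff.mp hn with h | h
  · exact h.1
  · exact absurd h.2 (Real.rpow_nonneg n.cast_nonneg m).not_gt

theorem tendsto_comp_div_rpow {p : ℕ → ℝ} {a m ξ : ℝ} (hm : 0 < m)
    (hpa : Tendsto (fun n => p n / (n : ℝ) ^ m) atTop (𝓝 a))
    {u : ℕ → ℕ} (hu : Tendsto u atTop atTop) {w : ℕ → ℝ} (hw : ∀ n, 0 ≤ w n)
    (huw : Tendsto (fun n => (u n : ℝ) / w n) atTop (𝓝 ξ)) :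
    Tendsto (fun n => p (u n) / w n ^ m) atTop (𝓝 (a * ξ ^ m)) := by
  refine ((hpa.comp hu).mul (huw.rpow_const (Or.inr hm.le))).congr' ?_
  filter_upwards [hu.eventually_ne_atTop 0] with n hn
  have : (u n : ℝ) ^ m ≠ 0 := (Real.rpow_pos_of_pos (by positivity) m).ne'
  simp only [Function.comp_apply, Real.div_rpow (Nat.cast_nonneg _) (hw n)]
  field_simp

theorem tendsto_div_add_of_tendsto_div {α : Type*} {l : Filter α} {P Q W : α → ℝ} {A B : ℝ}
    (hW : ∀ᶠ x in l, W x ≠ 0) (hP : Tendsto (fun x => P x / W x) l (𝓝 A))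
    (hQ : Tendsto (fun x => Q x / W x) l (𝓝 B)) (hAB : A + B ≠ 0) :
    Tendsto (fun x => P x / (P x + Q x)) l (𝓝 (A / (A + B))) := by
  refine (hP.div (hP.add hQ) hAB).congr' ?_
  filter_upwards [hW] with x hx
  show P x / W x / (P x / W x + Q x / W x) = _
  rw [← add_div, div_div_div_cancel_right₀ hx]

/-- The summand `n` keeps the index strictly increasing also for `c = 0`. -/
noncomputable def sqIndex (c : ℝ) (n : ℕ) : ℕ := n + ⌊c * n ^ 2⌋₊

theorem sqIndex_strictMono {c : ℝ} (hc : 0 ≤ c) : StrictMono (sqIndex c) :=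
  strictMono_id.add_monotone fun _ _ h => Nat.floor_mono (by gcongr)

theorem tendsto_sqIndex_div_sq {c : ℝ} (hc : 0 ≤ c) :
    Tendsto (fun n => (sqIndex c n : ℝ) / (n : ℝ) ^ 2) atTop (𝓝 c) := by
  have hsq : Tendsto (fun n : ℕ => (n : ℝ) ^ 2) atTop atTop :=
    (tendsto_pow_atTop two_ne_zero).comp tendsto_natCast_atTop_atTop
  have hlin : Tendsto (fun n : ℕ => (n : ℝ) / (n : ℝ) ^ 2) atTop (𝓝 0) := by
    refine tendsto_inv_atTop_zero.comp tendsto_natCast_atTop_atTop |>.congr fun n => ?_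
    simp [sq]
  simpa [sqIndex, add_div] using hlin.add ((tendsto_nat_floor_mul_div_atTop hc).comp hsq)

noncomputable def cordWeight (a b m ξ : ℝ) : ℝ := a * ξ ^ m / (a * ξ ^ m + b * (1 - ξ) ^ m)

theorem cordWeight_denom_pos {a b m ξ : ℝ} (ha : 0 < a) (hb : 0 < b) (hm : 0 < m)
    (hξ : ξ ∈ Set.Icc 0 1) : 0 < a * ξ ^ m + b * (1 - ξ) ^ m := by
  have h1 : 0 ≤ (1 - ξ) ^ m := Real.rpow_nonneg (by linarith [hξ.2]) m
  rcases hξ.1.eq_or_lt with rfl | hξ0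
  · simp [Real.zero_rpow hm.ne', hb]
  · have := Real.rpow_pos_of_pos hξ0 m
    positivity

theorem exists_cordWeight_eq {a b m R L K : ℝ} (ha : 0 < a) (hb : 0 < b) (hm : 0 < m)
    (hK : K ∈ Set.uIcc R L) :
    ∃ ξ ∈ Set.Icc (0 : ℝ) 1, (1 - cordWeight a b m ξ) * R + cordWeight a b m ξ * L = K := by
  have hpow := Real.continuous_rpow_const hm.le
  have hw : ContinuousOn (cordWeight a b m) (Set.Icc 0 1) :=
    ContinuousOn.div (by fun_prop) (by fun_prop) fun ξ hξ => (cordWeight_denom_pos ha hb hm hξ).ne'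
  have hw0 : cordWeight a b m 0 = 0 := by simp [cordWeight, Real.zero_rpow hm.ne']
  have hw1 : cordWeight a b m 1 = 1 := by simp [cordWeight, Real.zero_rpow hm.ne', ha.ne']
  rw [← Set.uIcc_of_le zero_le_one] at hw ⊢
  exact intermediate_value_uIcc (by fun_prop) (by simpa [hw0, hw1] using hK)

theorem tendsto_cordWeight {p q : ℕ → ℝ} {a b m ξ : ℝ} (ha : 0 < a) (hb : 0 < b) (hm : 0 < m)
    (hpa : Tendsto (fun n => p n / (n : ℝ) ^ m) atTop (𝓝 a))
    (hqb : Tendsto (fun n => q n / (n : ℝ) ^ m) atTop (𝓝 b)) (hξ : ξ ∈ Set.Icc 0 1) :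
    Tendsto (fun n => p (sqIndex ξ n) / (p (sqIndex ξ n) + q (sqIndex (1 - ξ) n))) atTop
      (𝓝 (cordWeight a b m ξ)) := by
  have hξ' : 0 ≤ 1 - ξ := by linarith [hξ.2]
  refine tendsto_div_add_of_tendsto_div (W := fun n : ℕ => ((n : ℝ) ^ 2) ^ m) ?_
    (tendsto_comp_div_rpow hm hpa (sqIndex_strictMono hξ.1).tendsto_atTop (fun n => by positivity)
      (tendsto_sqIndex_div_sq hξ.1))
    (tendsto_comp_div_rpow hm hqb (sqIndex_strictMono hξ').tendsto_atTop (fun n => by positivity)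
      (tendsto_sqIndex_div_sq hξ'))
    (cordWeight_denom_pos ha hb hm hξ).ne'
  filter_upwards [eventually_ne_atTop 0] with n hn
  exact (Real.rpow_pos_of_pos (by positivity) m).ne'

theorem poly_decay_all_cord_derivs_general (a b m : ℝ) (ha : 0 < a) (hb : 0 < b) (hm : 0 < m)
    (p q : ℕ → ℝ)
    (hpa : Tendsto (fun n => p n / (n : ℝ) ^ m) atTop (𝓝 a))
    (hqb : Tendsto (fun n => q n / (n : ℝ) ^ m) atTop (𝓝 b))
    (f : ℝ → ℝ) (R L : ℝ)
    (hR : Tendsto (fun n => f (1 / p n) / (1 / p n)) atTop (𝓝 R))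
    (hL : Tendsto (fun n => f (-(1 / q n)) / (-(1 / q n))) atTop (𝓝 L))
    (K : ℝ) (hK1 : min L R ≤ K) (hK2 : K ≤ max L R) :
    ∃ i j : ℕ → ℕ, StrictMono i ∧ StrictMono j ∧
      Tendsto (fun n => (f (1 / p (i n)) - f (-(1 / q (j n)))) / (1 / p (i n) + 1 / q (j n)))
        atTop (𝓝 K) := by
  obtain ⟨ξ, hξ, rfl⟩ := exists_cordWeight_eq (R := R) (L := L) ha hb hm
    (by rw [Set.uIcc, min_comm, max_comm]; exact ⟨hK1, hK2⟩)
  have hξ' : 0 ≤ 1 - ξ := by linarith [hξ.2]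
  have hi := (sqIndex_strictMono hξ.1).tendsto_atTop
  have hj := (sqIndex_strictMono hξ').tendsto_atTop
  exact ⟨_, _, sqIndex_strictMono hξ.1, sqIndex_strictMono hξ',
    tendsto_cord_quotient (hi.eventually (eventually_pos_of_tendsto_div_rpow ha hpa))
      (hj.eventually (eventually_pos_of_tendsto_div_rpow hb hqb)) (hR.comp hi) (hL.comp hj)
      (tendsto_cordWeight ha hb hm hpa hqb hξ)⟩

theorem poly_decay_all_cord_derivs (a b m : ℝ) (ha : 0 < a) (hb : 0 < b) (hm : 0 < m)
    (p q : ℕ → ℝ) (hp : StrictMono p) (hq : StrictMono q)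
    (hpa : Tendsto (fun n => p n / (n : ℝ) ^ m) atTop (𝓝 a))
    (hqb : Tendsto (fun n => q n / (n : ℝ) ^ m) atTop (𝓝 b))
    (f : ℝ → ℝ) (R L : ℝ) (hf0 : f 0 = 0)
    (hR : Tendsto (fun n => f (1 / p n) / (1 / p n)) atTop (𝓝 R))
    (hL : Tendsto (fun n => f (-(1 / q n)) / (-(1 / q n))) atTop (𝓝 L))
    (K : ℝ) (hK1 : min L R ≤ K) (hK2 : K ≤ max L R) :
    ∃ i j : ℕ → ℕ, StrictMono i ∧ StrictMono j ∧
      Tendsto (fun n => (f (1 / p (i n)) - f (-(1 / q (j n)))) / (1 / p (i n) + 1 / q (j n)))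
        atTop (𝓝 K) :=
  poly_decay_all_cord_derivs_general a b m ha hb hm p q hpa hqb f R L hR hL K hK1 hK2
end

section
/- Let a, b, m > 0 and p, q : ℕ → ℝ increasing with p(n)/n^m → a, q(n)/n^m → b. Then for every r with 0 < r < 1 there exist strictly increasing sequences of indices i_n, j_n such that q(j_n)/(q(j_n) + p(i_n)) → r. Equivalently, with h_n = 1/p(n), k_n = 1/q(n): h_{i_n}/(h_{i_n} + k_{j_n}) → r. -/
/-!
Take indices `i n`, `j n → ∞` with `j n / i n → c`. Then
`q (j n) / p (i n) ≈ b (j n)^m / (a (i n)^m) → b c^m / a`, and since `c ↦ b c^m / a` maps `(0, ∞)`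
onto `(0, ∞)`, the choice `c = (t a / b)^(1/m)` with `t = r / (1 - r)` makes the ratio tend to `t`,
hence `q (j n) / (q (j n) + p (i n)) → t / (t + 1) = r`. Every positive `c` is a limit of ratios of
strictly increasing index sequences: `i n = K n`, `j n = ⌊c K n⌋₊` with `c K ≥ 1`.
-/

open Filter Topology

theorem strictMono_nat_floor_mul {R : Type*} [Semiring R] [LinearOrder R] [IsStrictOrderedRing R]
    [FloorSemiring R] {x : R} (hx : 1 ≤ x) : StrictMono fun n : ℕ => ⌊x * n⌋₊ := by
  refine strictMono_nat_of_lt_succ fun n => ?_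
  have hxn : 0 ≤ x * n := mul_nonneg (zero_le_one.trans hx) n.cast_nonneg
  calc ⌊x * n⌋₊ < ⌊x * n + 1⌋₊ := by rw [Nat.floor_add_one hxn]; exact Nat.lt_succ_self _
    _ ≤ ⌊x * ↑(n + 1)⌋₊ := Nat.floor_le_floor (by push_cast; rw [mul_add_one]; gcongr)

theorem exists_strictMono_tendsto_div {c : ℝ} (hc : 0 < c) :
    ∃ i j : ℕ → ℕ, StrictMono i ∧ StrictMono j ∧
      Tendsto (fun n => (j n : ℝ) / i n) atTop (𝓝 c) := by
  obtain ⟨K, hK⟩ := exists_nat_gt c⁻¹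
  have hK0 : 0 < K := by exact_mod_cast (inv_pos.2 hc).trans hK
  have hcK : 1 ≤ c * K := by rw [← inv_mul_le_iff₀ hc, mul_one]; exact hK.le
  refine ⟨fun n => K * n, fun n => ⌊c * K * n⌋₊, strictMono_mul_left_of_pos hK0,
    strictMono_nat_floor_mul hcK, ?_⟩
  have hlim := ((tendsto_nat_floor_mul_div_atTop (zero_le_one.trans hcK)).comp
    tendsto_natCast_atTop_atTop).div_const (K : ℝ)
  rw [mul_div_cancel_right₀ c (by positivity)] at hlim
  refine hlim.congr fun n => ?_
  simp only [Function.comp_apply, Nat.cast_mul, div_div, mul_comm]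

theorem tendsto_comp_div_comp_of_tendsto_div_rpow {p q : ℕ → ℝ} {a b m c : ℝ} {i j : ℕ → ℕ}
    (hpa : Tendsto (fun n => p n / (n : ℝ) ^ m) atTop (𝓝 a))
    (hqb : Tendsto (fun n => q n / (n : ℝ) ^ m) atTop (𝓝 b)) (ha : a ≠ 0)
    (hi : Tendsto i atTop atTop) (hj : Tendsto j atTop atTop)
    (hji : Tendsto (fun n => (j n : ℝ) / i n) atTop (𝓝 c)) (hc : c ≠ 0) :
    Tendsto (fun n => q (j n) / p (i n)) atTop (𝓝 (b * c ^ m / a)) := by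
  refine (((hqb.comp hj).mul (hji.rpow_const (Or.inl hc))).div (hpa.comp hi) ha).congr' ?_
  filter_upwards [hi.eventually_ge_atTop 1, hj.eventually_ge_atTop 1] with n hin hjn
  have hipos : (0 : ℝ) < i n := by exact_mod_cast hin
  have hjpos : (0 : ℝ) < j n := by exact_mod_cast hjn
  simp only [Pi.div_apply, Function.comp_apply]
  rw [Real.div_rpow hjpos.le hipos.le, div_mul_div_cancel₀ (Real.rpow_pos_of_pos hjpos m).ne',
    div_div_div_cancel_right₀ (Real.rpow_pos_of_pos hipos m).ne']

theorem Filter.Tendsto.div_add_self {α : Type*} {l : Filter α} {f g : α → ℝ} {t : ℝ}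
    (h : Tendsto (fun x => f x / g x) l (𝓝 t)) (hg : ∀ᶠ x in l, g x ≠ 0) (ht : t + 1 ≠ 0) :
    Tendsto (fun x => f x / (f x + g x)) l (𝓝 (t / (t + 1))) :=
  (h.div (h.add_const 1) ht).congr' <| hg.mono fun x hx => by
    simp only [Pi.div_apply]
    rw [div_add_one hx, div_div_div_cancel_right₀ hx]

theorem poly_decay_ratio_dense_general (a b m : ℝ) (ha : 0 < a) (hb : 0 < b) (hm : 0 < m)
    (p q : ℕ → ℝ)
    (hpa : Tendsto (fun n => p n / (n : ℝ) ^ m) atTop (𝓝 a))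
    (hqb : Tendsto (fun n => q n / (n : ℝ) ^ m) atTop (𝓝 b))
    (r : ℝ) (hr0 : 0 < r) (hr1 : r < 1) :
    ∃ i j : ℕ → ℕ, StrictMono i ∧ StrictMono j ∧
      Tendsto (fun n => q (j n) / (q (j n) + p (i n))) atTop (𝓝 r) := by
  have h1r : 0 < 1 - r := sub_pos.2 hr1
  set t := r / (1 - r)
  have ht : 0 < t := div_pos hr0 h1r
  set c := (t * a / b) ^ m⁻¹
  have hc : 0 < c := by positivity
  have hbca : b * c ^ m / a = t := by
    rw [Real.rpow_inv_rpow (by positivity) hm.ne']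
    field_simp
  obtain ⟨i, j, hi, hj, hji⟩ := exists_strictMono_tendsto_div hc
  have hqp := tendsto_comp_div_comp_of_tendsto_div_rpow hpa hqb ha.ne' hi.tendsto_atTop
    hj.tendsto_atTop hji hc.ne'
  rw [hbca] at hqp
  have hp : ∀ᶠ n in atTop, p (i n) ≠ 0 := hi.tendsto_atTop.eventually <|
    (hpa.eventually_ne ha.ne').mono fun _ hn => (div_ne_zero_iff.mp hn).1
  refine ⟨i, j, hi, hj, ?_⟩
  convert hqp.div_add_self hp (by positivity) using 2
  simp only [t]
  field_simp
  ring

theorem poly_decay_ratio_dense (a b m : ℝ) (ha : 0 < a) (hb : 0 < b) (hm : 0 < m)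
    (p q : ℕ → ℝ) (hp : StrictMono p) (hq : StrictMono q)
    (hpa : Tendsto (fun n => p n / (n : ℝ) ^ m) atTop (𝓝 a))
    (hqb : Tendsto (fun n => q n / (n : ℝ) ^ m) atTop (𝓝 b))
    (r : ℝ) (hr0 : 0 < r) (hr1 : r < 1) :
    ∃ i j : ℕ → ℕ, StrictMono i ∧ StrictMono j ∧
      Tendsto (fun n => q (j n) / (q (j n) + p (i n))) atTop (𝓝 r) :=
  poly_decay_ratio_dense_general a b m ha hb hm p q hpa hqb r hr0 hr1
end

section
/- Let a, b > 1 be real numbers with log(a)/log(b) irrational, h_n = a^{−n}, k_n = b^{−n}. If f(0) = 0, f(h_n)/h_n → R and f(−k_n)/(−k_n) → L with R, L real, then every real number between L and R is a sequential cord derivative of f at 0 (a limit of (f(h_{i_n}) − f(−k_{j_n}))/(h_{i_n} + k_{j_n}) along subsequences). -/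
/-!
Writing `h = a⁻ⁱ`, `k = b⁻ʲ`, the cord quotient `(f h - f (-k)) / (h + k)` is the convex
combination `μ (f h / h) + (1 - μ) (f (-k) / (-k))` with weight
`μ = (1 + exp (i log a - j log b))⁻¹`.
Since `log a / log b` is irrational, the multiples of `log a` are dense modulo `log b`, so
`i log a - j log b` approaches every real number with `i, j → ∞`; hence every `μ ∈ (0, 1)`, and by
closedness every `μ ∈ [0, 1]`, is a limit of weights along strictly increasing `i, j`.
-/

open Filter Set Topology

theorem AddCircle.mapClusterPt_nsmul_coe {x p : ℝ} [Fact (0 < p)] (h : Irrational (x / p))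
    (z : AddCircle p) : MapClusterPt z atTop (fun n : ℕ => n • (x : AddCircle p)) :=
  ((mapClusterPt_atTop_nsmul_tfae z _).out 0 3).2 <| by
    rw [(AddCircle.denseRange_zsmul_coe_iff.2 h).closure_range]
    trivial

theorem mapClusterPt_natCast_mul_sub_natCast_mul {x y : ℝ} (hx : 0 < x) (hy : 0 < y)
    (hxy : Irrational (x / y)) (c : ℝ) :
    MapClusterPt c atTop (fun p : ℕ × ℕ => (p.1 : ℝ) * x - p.2 * y) := by
  have : Fact (0 < y) := ⟨hy⟩
  rw [mapClusterPt_iff_frequently]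
  intro s hs
  rw [frequently_atTop]
  rintro ⟨N, M⟩
  obtain ⟨V, hVs, hVo, hcV⟩ :=
    mem_nhds_iff.1 (inter_mem hs (Ioo_mem_nhds (by linarith : c - 1 < c) (lt_add_one c)))
  have hV : ((↑) : ℝ → AddCircle y) '' V ∈ 𝓝 (c : AddCircle y) :=
    (QuotientAddGroup.isOpenMap_coe _ hVo).mem_nhds (mem_image_of_mem _ hcV)
  -- `n x ≥ M y + c + 1` forces the integer `k` with `n x - k y ∈ (c - 1, c + 1)` to be `≥ M`.
  obtain ⟨n, hn, r, hrV, hr⟩ := frequently_atTop.1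
    (mapClusterPt_iff_frequently.1 (AddCircle.mapClusterPt_nsmul_coe hxy c) _ hV)
    (max N ⌈(M * y + c + 1) / x⌉₊)
  obtain ⟨k, hk⟩ : ∃ k : ℤ, k • y = n * x - r := by
    rw [← AddCircle.coe_eq_zero_iff, AddCircle.coe_sub, ← nsmul_eq_mul, AddCircle.coe_nsmul, hr,
      sub_self]
  rw [zsmul_eq_mul] at hk
  have hnx : M * y + c + 1 ≤ n * x := by
    rw [← div_le_iff₀ hx]
    exact (Nat.le_ceil _).trans (Nat.cast_le.2 (le_of_max_le_right hn))
  have hkM : (M : ℤ) ≤ k := by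
    have hrc : r < c + 1 := (hVs hrV).2.2
    have : (M : ℝ) * y ≤ k * y := by linarith
    exact_mod_cast (mul_le_mul_iff_left₀ hy).1 this
  refine ⟨(n, k.toNat), ⟨le_of_max_le_left hn, by omega⟩, ?_⟩
  have hr' : r = n * x - k.toNat * y := by
    rw [show ((k.toNat : ℕ) : ℝ) = k by exact_mod_cast Int.toNat_of_nonneg (by omega)]
    linarith
  exact hr' ▸ (hVs hrV).1

theorem mapClusterPt_inv_one_add_exp {ι : Type*} {F : Filter ι} {u : ι → ℝ}
    (hu : ∀ c, MapClusterPt c F u) {μ : ℝ} (hμ : μ ∈ Icc 0 1) :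
    MapClusterPt μ F (fun i => (1 + Real.exp (u i))⁻¹) := by
  suffices Ioo 0 1 ⊆ {μ | MapClusterPt μ F (fun i => (1 + Real.exp (u i))⁻¹)} from
    closure_minimal this isClosed_setOfPred_clusterPt (by rwa [closure_Ioo zero_ne_one])
  rintro μ ⟨hμ0, hμ1⟩
  have hσ : (1 + Real.exp (Real.log ((1 - μ) / μ)))⁻¹ = μ := by
    rw [Real.exp_log (div_pos (sub_pos.2 hμ1) hμ0)]
    field_simp
    ring
  have hcont : Continuous fun c : ℝ => (1 + Real.exp c)⁻¹ :=
    (continuous_const.add Real.continuous_exp).inv₀ fun c => (add_pos one_pos (Real.exp_pos c)).ne'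
  rw [mem_ofPred_eq, ← hσ]
  exact (hu _).tendsto_comp (f := fun c => (1 + Real.exp c)⁻¹) (hcont.tendsto _)

theorem exists_strictMono_tendsto_of_mapClusterPt_prod {X : Type*} [TopologicalSpace X]
    [FirstCountableTopology X] {u : ℕ × ℕ → X} {x : X} (hx : MapClusterPt x atTop u) :
    ∃ i j : ℕ → ℕ, StrictMono i ∧ StrictMono j ∧ Tendsto (fun n => u (i n, j n)) atTop (𝓝 x) := by
  obtain ⟨ψ, hux, hψ⟩ := hx.exists_seq_tendsto
  rw [← prod_atTop_atTop_eq, tendsto_prod_iff'] at hψ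
  obtain ⟨φ₁, hφ₁, h₁⟩ := strictMono_subseq_of_tendsto_atTop hψ.1
  obtain ⟨φ₂, hφ₂, h₂⟩ := strictMono_subseq_of_tendsto_atTop (hψ.2.comp hφ₁.tendsto_atTop)
  exact ⟨_, _, h₁.comp hφ₂, h₂, hux.comp (hφ₁.comp hφ₂).tendsto_atTop⟩

theorem cord_quotient_eq (f : ℝ → ℝ) {h k : ℝ} (hh : h ≠ 0) (hk : k ≠ 0) (hhk : h + k ≠ 0) :
    (f h - f (-k)) / (h + k) = h / (h + k) * (f h / h) + (1 - h / (h + k)) * (f (-k) / (-k)) := by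
  field_simp
  ring

theorem Filter.Tendsto.cord_quotient {ι : Type*} {l : Filter ι} {f : ℝ → ℝ} {h k : ι → ℝ}
    (hh : ∀ n, 0 < h n) (hk : ∀ n, 0 < k n) {R L μ : ℝ}
    (hR : Tendsto (fun n => f (h n) / h n) l (𝓝 R))
    (hL : Tendsto (fun n => f (-k n) / (-k n)) l (𝓝 L))
    (hμ : Tendsto (fun n => h n / (h n + k n)) l (𝓝 μ)) :
    Tendsto (fun n => (f (h n) - f (-k n)) / (h n + k n)) l (𝓝 (μ * R + (1 - μ) * L)) := by
  have hlim := (hμ.mul hR).add (((tendsto_const_nhds (x := (1 : ℝ))).sub hμ).mul hL)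
  refine hlim.congr fun n => (cord_quotient_eq f ?_ ?_ ?_).symm
  all_goals linarith [hh n, hk n]

theorem one_div_pow_div_add_eq_inv_one_add_exp {a b : ℝ} (ha : 0 < a) (hb : 0 < b) (i j : ℕ) :
    1 / a ^ i / (1 / a ^ i + 1 / b ^ j) = (1 + Real.exp (i * Real.log a - j * Real.log b))⁻¹ := by
  rw [Real.exp_sub, ← Real.log_pow, ← Real.log_pow, Real.exp_log (by positivity),
    Real.exp_log (by positivity)]
  field_simp

theorem exp_decay_irrational_all_cord_derivs_general (a b : ℝ) (ha : 1 < a) (hb : 1 < b)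
    (hirr : Irrational (Real.log a / Real.log b))
    (f : ℝ → ℝ) (R L : ℝ)
    (hR : Tendsto (fun n : ℕ => f (1 / a ^ n) / (1 / a ^ n)) atTop (𝓝 R))
    (hL : Tendsto (fun n : ℕ => f (-(1 / b ^ n)) / (-(1 / b ^ n))) atTop (𝓝 L))
    (K : ℝ) (hK1 : min L R ≤ K) (hK2 : K ≤ max L R) :
    ∃ i j : ℕ → ℕ, StrictMono i ∧ StrictMono j ∧
      Tendsto (fun n => (f (1 / a ^ i n) - f (-(1 / b ^ j n))) / (1 / a ^ i n + 1 / b ^ j n))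
        atTop (𝓝 K) := by
  obtain ⟨μ, hμ, rfl⟩ : ∃ μ ∈ Icc (0 : ℝ) 1, μ * R + (1 - μ) * L = K := by
    have hK : K ∈ segment ℝ L R := by
      rw [segment_eq_uIcc]
      exact ⟨hK1, hK2⟩
    obtain ⟨s, t, hs, ht, hst, rfl⟩ := hK
    refine ⟨t, ⟨ht, by linarith⟩, ?_⟩
    rw [← hst]
    simp only [smul_eq_mul]
    ring
  have hdense := mapClusterPt_natCast_mul_sub_natCast_mul (Real.log_pos ha) (Real.log_pos hb) hirr
  obtain ⟨i, j, hi, hj, hij⟩ :=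
    exists_strictMono_tendsto_of_mapClusterPt_prod (mapClusterPt_inv_one_add_exp hdense hμ)
  refine ⟨i, j, hi, hj, Tendsto.cord_quotient (fun n => by positivity) (fun n => by positivity)
    (hR.comp hi.tendsto_atTop) (hL.comp hj.tendsto_atTop) ?_⟩
  simpa only [one_div_pow_div_add_eq_inv_one_add_exp (by positivity : 0 < a)
    (by positivity : 0 < b)] using hij

theorem exp_decay_irrational_all_cord_derivs (a b : ℝ) (ha : 1 < a) (hb : 1 < b)
    (hirr : Irrational (Real.log a / Real.log b))
    (f : ℝ → ℝ) (R L : ℝ) (hf0 : f 0 = 0)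
    (hR : Tendsto (fun n : ℕ => f (1 / a ^ n) / (1 / a ^ n)) atTop (𝓝 R))
    (hL : Tendsto (fun n : ℕ => f (-(1 / b ^ n)) / (-(1 / b ^ n))) atTop (𝓝 L))
    (K : ℝ) (hK1 : min L R ≤ K) (hK2 : K ≤ max L R) :
    ∃ i j : ℕ → ℕ, StrictMono i ∧ StrictMono j ∧
      Tendsto (fun n => (f (1 / a ^ i n) - f (-(1 / b ^ j n))) / (1 / a ^ i n + 1 / b ^ j n))
        atTop (𝓝 K) :=
  exp_decay_irrational_all_cord_derivs_general a b ha hb hirr f R L hR hL K hK1 hK2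
end
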